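/- Fix r > 0 and define, for s ∈ [0, r), Φ_r(s) = log(r − s) + s/(r − s) + ½(r² − s²). Then inf_{s∈[0,r)} Φ_r(s) = f(r), where f(r) = log r + r²/2 if 0 < r ≤ 1 and f(r) = 2r − 3/2 if r ≥ 1; moreover the infimum is attained at s = max(r − 1, 0). -/
import Mathlib


/-- f(r) = log r + r²/2 for r ≤ 1 and 2r − 3/2 for r ≥ 1. -/
noncomputable def fOrd (r : ℝ) : ℝ := if r ≤ 1 then Real.log r + r ^ 2 / 2 else 2 * r - 3 / 2

/-- Φ_r(s) = log(r−s) + s/(r−s) + ½(r² − s²). -/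
noncomputable def PhiFun (r s : ℝ) : ℝ :=
  Real.log (r - s) + s / (r - s) + (1 / 2) * (r ^ 2 - s ^ 2)

lemma log_le_half (x : ℝ) (hx : 1 ≤ x) : Real.log x ≤ (x - x⁻¹) / 2 := by
  have hx0 : 0 < x := lt_of_lt_of_le one_pos hx
  have h1 : (0:ℝ) ≤ Real.log x := Real.log_nonneg hx
  have := Real.self_le_sinh_iff.mpr h1
  rwa [Real.sinh_log hx0] at this

lemma half_le_log (x : ℝ) (hx0 : 0 < x) (hx : x ≤ 1) : (x - x⁻¹) / 2 ≤ Real.log x := by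
  have h1 : Real.log x ≤ 0 := Real.log_nonpos hx0.le hx
  have := Real.sinh_le_self_iff.mpr h1
  rwa [Real.sinh_log hx0] at this

lemma log_ge_quad (x : ℝ) (hx : 0 ≤ x) : x - x ^ 2 / 2 ≤ Real.log (1 + x) := by
  have hmono : MonotoneOn (fun y : ℝ => Real.log (1 + y) - y + y ^ 2 / 2) (Set.Ici 0) := by
    apply monotoneOn_of_deriv_nonneg (convex_Ici 0)
    · apply ContinuousOn.add
      · apply ContinuousOn.sub
        · apply ContinuousOn.log (by fun_prop)
          intro y hy
          have : (0:ℝ) ≤ y := hy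
          positivity
        · fun_prop
      · fun_prop
    · intro y hy
      rw [interior_Ici] at hy
      have hy0 : (0:ℝ) < y := hy
      apply DifferentiableAt.differentiableWithinAt
      apply DifferentiableAt.add
      · apply DifferentiableAt.sub
        · apply DifferentiableAt.log (by fun_prop)
          positivity
        · fun_prop
      · fun_prop
    · intro y hy
      rw [interior_Ici] at hy
      have hy0 : (0:ℝ) < y := hy
      have h1y : (0:ℝ) < 1 + y := by linarith
      have hd : HasDerivAt (fun y : ℝ => Real.log (1 + y) - y + y ^ 2 / 2)
          ((1 + y)⁻¹ * (0 + 1) - 1 + 2 * y ^ 1 / 2) y := by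
        exact (((Real.hasDerivAt_log h1y.ne').comp y
          ((hasDerivAt_const y (1:ℝ)).add (hasDerivAt_id y))).sub (hasDerivAt_id y)).add
          ((hasDerivAt_pow 2 y).div_const 2)
      rw [hd.deriv]
      have : (1 + y)⁻¹ * (0 + 1) - 1 + 2 * y ^ 1 / 2 = y ^ 2 / (1 + y) := by
        field_simp
        ring
      rw [this]
      positivity
  have := hmono (Set.self_mem_Ici) (show x ∈ Set.Ici (0:ℝ) from hx) hx
  simp only [add_zero, Real.log_one] at this
  linarith

lemma key (r t : ℝ) (ht : 0 < t) (htr : t ≤ r) :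
    fOrd r ≤ Real.log t + (r - t) / t + (1 / 2) * (r ^ 2 - (r - t) ^ 2) := by
  rw [fOrd]
  have hdiv : (r - t) / t = r / t - 1 := by field_simp
  rw [hdiv]
  split_ifs with h1
  · -- r ≤ 1, so t ≤ 1
    have htle1 : t ≤ 1 := le_trans htr h1
    have hlog : Real.log r - Real.log t ≤ (r / t - (r / t)⁻¹) / 2 := by
      have := log_le_half (r / t) ((one_le_div ht).mpr htr)
      rwa [Real.log_div (by linarith : r ≠ 0) ht.ne'] at this
    have hinv : (r / t)⁻¹ = t / r := by
      rw [inv_div]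
    rw [hinv] at hlog
    have hr0 : 0 < r := lt_of_lt_of_le ht htr
    have h2 : r / t - t / r = (r ^ 2 - t ^ 2) / (r * t) := by
      field_simp
    have h3 : r / t = ((r - t) + t) / t := by ring_nf
    -- goal: log r + r^2/2 ≤ log t + r/t - 1 + (1/2)(r^2 - (r-t)^2)
    have hrt1 : r * t ≤ 1 := by nlinarith
    have hrtpos : 0 < r * t := mul_pos hr0 ht
    -- (log r - log t) ≤ (r^2 - t^2)/(2rt); suffices r/t - 1 - (r^2-t^2)/(2rt) ≥ (r-t)^2/2
    rw [h2] at hlog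
    have hkey : (r - t) ^ 2 / 2 ≤ r / t - 1 - (r ^ 2 - t ^ 2) / (r * t) / 2 := by
      rw [← sub_nonneg]
      have heq : r / t - 1 - (r ^ 2 - t ^ 2) / (r * t) / 2 - (r - t) ^ 2 / 2
          = (r - t) ^ 2 * (1 - r * t) / (2 * (r * t)) := by
        field_simp; ring
      rw [heq]
      exact div_nonneg (mul_nonneg (sq_nonneg _) (by linarith)) (by positivity)
    linarith [hlog, hkey]
  · -- 1 < r
    push_neg at h1
    rcases le_or_gt t 1 with h2 | h2
    · -- t ≤ 1: use half_le_log
      have hlog := half_le_log t ht h2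
      have hinv : t⁻¹ = 1 / t := by rw [one_div]
      rw [hinv] at hlog
      have h3 : (t - 1) ^ 2 / t ≤ r * ((t - 1) ^ 2 / t) := by
        nlinarith [sq_nonneg (t-1), div_nonneg (sq_nonneg (t-1)) ht.le]
      have h4 : r / t + r * t - 2 * r = r * ((t - 1) ^ 2 / t) := by
        field_simp; ring
      have h5 : (t - 1/t)/2 + (t - 1) ^ 2 / t + (1 - t^2)/2 ≥ 0 := by
        have heq : (t - 1/t)/2 + (t - 1) ^ 2 / t + (1 - t^2)/2 = (1 - t)^3 / (2 * t) := by
          field_simp; ring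
        rw [ge_iff_le, heq]
        exact div_nonneg (pow_nonneg (by linarith) 3) (by positivity)
      nlinarith [hlog, h3, h4, h5]
    · -- 1 < t: use log_ge_quad with x = t - 1
      have hlog := log_ge_quad (t - 1) (by linarith)
      rw [show (1:ℝ) + (t - 1) = t by ring] at hlog
      have hq : 0 ≤ 1 / t + t - 2 := by
        have heq : 1 / t + t - 2 = (t - 1)^2 / t := by field_simp; ring
        rw [heq]; positivity
      have h3 : t * (1 / t + t - 2) ≤ r * (1 / t + t - 2) := by
        apply mul_le_mul_of_nonneg_right htr hq
      have h4 : t * (1 / t + t - 2) = (t - 1) ^ 2 := by field_simp; ring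
      have h5 : r * (1 / t + t - 2) = r / t + r * t - 2 * r := by field_simp
      nlinarith [hlog, h3]

theorem stmt15 (r : ℝ) (hr : 0 < r) :
    (∀ s ∈ Set.Ico (0 : ℝ) r, fOrd r ≤ PhiFun r s) ∧
    max (r - 1) 0 ∈ Set.Ico (0 : ℝ) r ∧
    PhiFun r (max (r - 1) 0) = fOrd r := by
  refine ⟨?_, ?_, ?_⟩
  · intro s hs
    obtain ⟨hs0, hsr⟩ := hs
    have := key r (r - s) (by linarith) (by linarith)
    rw [PhiFun]
    have h1 : r - (r - s) = s := by ring
    rw [h1] at this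
    have h2 : r ^ 2 - s ^ 2 = r ^ 2 - (r - (r - s)) ^ 2 := by ring
    linarith [this]
  · constructor
    · exact le_max_right _ _
    · exact max_lt (by linarith) hr
  · rcases le_or_gt r 1 with h1 | h1
    · have hm : max (r - 1) 0 = 0 := max_eq_right (by linarith)
      rw [hm, PhiFun, fOrd, if_pos h1]
      simp
      ring
    · have hm : max (r - 1) 0 = r - 1 := max_eq_left (by linarith)
      rw [hm, PhiFun, fOrd, if_neg (not_le.mpr h1)]
      have : r - (r - 1) = 1 := by ring
      rw [this]
      simp
      ring
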